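/- Let ε ∈ (0,1/2) and n ∈ ℕ. Then every injective map from the weighted diamond W_n into an equilateral metric space has distortion at least (1/2+ε)^{−n}; consequently the spaces W_n cannot be embedded with uniformly bounded distortion into equilateral spaces. -/

import Mathlib

noncomputable section

open scoped ENNReal Classical

namespace Stmt

/-- Vertex set together with the (oriented) edge relation of the diamond graph `D n`. -/
def VE : ℕ → (V : Type) × (V → V → Prop)
  | 0 => ⟨Fin 2, fun u v => u = 0 ∧ v = 1⟩
  | n + 1 =>
      ⟨(VE n).1 ⊕ ({e : (VE n).1 × (VE n).1 // (VE n).2 e.1 e.2} × Bool),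
        fun u v =>
          ∃ (e : {e : (VE n).1 × (VE n).1 // (VE n).2 e.1 e.2}) (b : Bool),
            (u = Sum.inl e.1.1 ∧ v = Sum.inr (e, b)) ∨
            (u = Sum.inr (e, b) ∧ v = Sum.inl e.1.2)⟩

/-- Vertices of the diamond graph `D n` (equivalently, of the weighted diamond `W n`). -/
def Vert (n : ℕ) : Type := (VE n).1

/-- The (oriented) edge relation of the diamond graph `D n`. -/
def dEdge (n : ℕ) : Vert n → Vert n → Prop := (VE n).2

/-- The edges of generation `k` inside the vertex set of `D n`: the edges of `D k`,
transported to `Vert n` via the canonical inclusions.  These are the edges of the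
weighted diamond `W n`, which get weight `(1/2 + ε) ^ k`. -/
def edgeAt : (n : ℕ) → (k : ℕ) → Vert n → Vert n → Prop
  | 0, k => fun u v => k = 0 ∧ dEdge 0 u v
  | n + 1, k => fun u v =>
      (k = n + 1 ∧ dEdge (n + 1) u v) ∨
      (∃ u' v' : Vert n, u = Sum.inl u' ∧ v = Sum.inl v' ∧ edgeAt n k u' v')

/-- Edge weights of the weighted diamond `W n`:  the value is `(1/2 + ε) ^ k` if `{u, v}`
is an edge of generation `k`, and `∞` if `{u, v}` is not an edge of `W n`. -/
def wCost (ε : ℝ) (n : ℕ) (u v : Vert n) : ℝ≥0∞ :=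
  ⨅ (k : ℕ) (_ : edgeAt n k u v ∨ edgeAt n k v u), ENNReal.ofReal ((1 / 2 + ε) ^ k)

/-- Total weight of a walk, recorded as the list of visited vertices. -/
def walkCost {V : Type*} (c : V → V → ℝ≥0∞) : List V → ℝ≥0∞
  | [] => 0
  | [_] => 0
  | u :: v :: l => c u v + walkCost c (v :: l)

/-- The shortest-path (extended) distance associated to an edge-weight function `c`. -/
def spDist {V : Type*} (c : V → V → ℝ≥0∞) (u v : V) : ℝ≥0∞ :=
  ⨅ p : { l : List V // l.head? = some u ∧ l.getLast? = some v }, walkCost c p.1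

/-- The shortest-path metric `d_{W_n}` of the weighted diamond `W n` (with parameter `ε`). -/
def dW (ε : ℝ) (n : ℕ) (u v : Vert n) : ℝ :=
  (spDist (wCost ε n) u v).toReal

/-- `embedsM K dV dY` : there is a map of distortion at most `K` from the space with distance
function `dV` to the space with distance function `dY`. -/
def embedsM {V Y : Type*} (K : ℝ) (dV : V → V → ℝ) (dY : Y → Y → ℝ) : Prop :=
  ∃ f : V → Y, Function.Injective f ∧ ∃ r : ℝ, 0 < r ∧
    ∀ a b, r * dV a b ≤ dY (f a) (f b) ∧ dY (f a) (f b) ≤ K * (r * dV a b)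


universe u

/-! Send each vertex to its height between the two poles of the diamond, `0` and `1`.
An edge of generation `k` joins vertices whose heights differ by `2⁻ᵏ ≤ (1/2 + ε)ᵏ`, so the
height is `1`-Lipschitz for `d_{W_n}`. Hence a generation-`0` edge has length at least `1`,
while every generation-`n` edge has length in `[2⁻ⁿ, (1/2 + ε)ⁿ]`. Both pairs consist of distinct
points, so in an equilateral space their images are equally far apart, and the ratio of the
two lengths bounds the distortion from below. -/

def height : (n : ℕ) → Vert n → ℝ
  | 0 => fun v => ((v : Fin 2).val : ℝ)
  | n + 1 => fun v =>
      match v with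
      | Sum.inl u => height n u
      | Sum.inr (e, _) => (height n e.1.1 + height n e.1.2) / 2

theorem height_of_dEdge : ∀ (n : ℕ) (u v : Vert n), dEdge n u v →
    height n v = height n u + (1 / 2 : ℝ) ^ n
  | 0, u, v, ⟨hu, hv⟩ => by
      subst hu hv
      show ((1 : Fin 2).val : ℝ) = ((0 : Fin 2).val : ℝ) + (1 / 2 : ℝ) ^ 0
      norm_num
  | n + 1, _, _, ⟨e, _, .inl ⟨hu, hv⟩⟩ | n + 1, _, _, ⟨e, _, .inr ⟨hu, hv⟩⟩ => by
      subst hu hv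
      simp only [height, height_of_dEdge n e.1.1 e.1.2 e.2]
      ring

theorem height_of_edgeAt : ∀ (n k : ℕ) (u v : Vert n), edgeAt n k u v →
    height n v = height n u + (1 / 2 : ℝ) ^ k
  | 0, _, u, v, ⟨hk, h⟩ => hk ▸ height_of_dEdge 0 u v h
  | n + 1, _, u, v, .inl ⟨hk, h⟩ => hk ▸ height_of_dEdge (n + 1) u v h
  | n + 1, k, _, _, .inr ⟨u', v', hu, hv, h⟩ => by
      subst hu hv
      exact height_of_edgeAt n k u' v' h

theorem ne_of_edgeAt {n k : ℕ} {u v : Vert n} (h : edgeAt n k u v) : u ≠ v := by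
  rintro rfl
  have := height_of_edgeAt n k u u h
  have : (0 : ℝ) < (1 / 2) ^ k := by positivity
  linarith

theorem exists_dEdge : ∀ n : ℕ, ∃ u v : Vert n, dEdge n u v
  | 0 => ⟨(0 : Fin 2), (1 : Fin 2), rfl, rfl⟩
  | n + 1 =>
      let ⟨u, v, h⟩ := exists_dEdge n
      ⟨Sum.inl u, Sum.inr (⟨(u, v), h⟩, true), ⟨(u, v), h⟩, true, .inl ⟨rfl, rfl⟩⟩

theorem edgeAt_self_of_dEdge : ∀ {n : ℕ} {u v : Vert n}, dEdge n u v → edgeAt n n u v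
  | 0, _, _, h => ⟨rfl, h⟩
  | _ + 1, _, _, h => .inl ⟨rfl, h⟩

theorem exists_edgeAt_self (n : ℕ) : ∃ u v : Vert n, edgeAt n n u v :=
  let ⟨u, v, h⟩ := exists_dEdge n
  ⟨u, v, edgeAt_self_of_dEdge h⟩

theorem exists_edgeAt_zero : ∀ n : ℕ, ∃ u v : Vert n, edgeAt n 0 u v
  | 0 => ⟨(0 : Fin 2), (1 : Fin 2), rfl, rfl, rfl⟩
  | n + 1 =>
      let ⟨u, v, h⟩ := exists_edgeAt_zero n
      ⟨Sum.inl u, Sum.inl v, .inr ⟨u, v, rfl, rfl, h⟩⟩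

section Walks

variable {V : Type*} (c : V → V → ℝ≥0∞)

theorem spDist_le (u v : V) : spDist c u v ≤ c u v :=
  iInf_le_of_le ⟨[u, v], rfl, rfl⟩ (by simp [walkCost])

variable {c} {φ : V → ℝ} (hφ : ∀ a b, ENNReal.ofReal |φ b - φ a| ≤ c a b)
include hφ

theorem ofReal_abs_sub_le_walkCost : ∀ (l : List V) (u v : V),
    l.head? = some u → l.getLast? = some v → ENNReal.ofReal |φ v - φ u| ≤ walkCost c l
  | [], _, _, hu, _ => by simp at hu
  | [x], u, v, hu, hv => by
      obtain rfl : x = u := by simpa using hu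
      obtain rfl : x = v := by simpa using hv
      simp
  | x :: y :: l, u, v, hu, hv => by
      obtain rfl : x = u := by simpa using hu
      rw [List.getLast?_cons_cons] at hv
      calc ENNReal.ofReal |φ v - φ x|
          ≤ ENNReal.ofReal (|φ y - φ x| + |φ v - φ y|) :=
            ENNReal.ofReal_le_ofReal ((abs_sub_le _ _ _).trans_eq (add_comm _ _))
        _ ≤ ENNReal.ofReal |φ y - φ x| + ENNReal.ofReal |φ v - φ y| := ENNReal.ofReal_add_le
        _ ≤ c x y + walkCost c (y :: l) :=
            add_le_add (hφ x y) (ofReal_abs_sub_le_walkCost (y :: l) y v rfl hv)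

theorem ofReal_abs_sub_le_spDist (u v : V) : ENNReal.ofReal |φ v - φ u| ≤ spDist c u v :=
  le_iInf fun p => ofReal_abs_sub_le_walkCost hφ p.1 u v p.2.1 p.2.2

end Walks

theorem wCost_le_of_edgeAt {ε : ℝ} {n k : ℕ} {u v : Vert n} (h : edgeAt n k u v) :
    wCost ε n u v ≤ ENNReal.ofReal ((1 / 2 + ε) ^ k) :=
  iInf₂_le k (.inl h)

theorem ofReal_abs_height_sub_le_wCost {ε : ℝ} (hε : 0 ≤ ε) (n : ℕ) (u v : Vert n) :
    ENNReal.ofReal |height n v - height n u| ≤ wCost ε n u v := by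
  refine le_iInf₂ fun k h => ENNReal.ofReal_le_ofReal ?_
  have : |height n v - height n u| = (1 / 2 : ℝ) ^ k := by
    rcases h with h | h <;> rw [height_of_edgeAt n k _ _ h] <;> simp
  rw [this]
  gcongr
  linarith

theorem dW_le_of_edgeAt {ε : ℝ} (hε : 0 ≤ ε) {n k : ℕ} {u v : Vert n} (h : edgeAt n k u v) :
    dW ε n u v ≤ (1 / 2 + ε) ^ k :=
  ENNReal.toReal_le_of_le_ofReal (by positivity) ((spDist_le _ u v).trans (wCost_le_of_edgeAt h))

theorem le_dW_of_edgeAt {ε : ℝ} (hε : 0 ≤ ε) {n k : ℕ} {u v : Vert n} (h : edgeAt n k u v) :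
    (1 / 2 : ℝ) ^ k ≤ dW ε n u v := by
  have hfin : spDist (wCost ε n) u v ≠ ⊤ :=
    ((spDist_le _ u v).trans (wCost_le_of_edgeAt h)).trans_lt ENNReal.ofReal_lt_top |>.ne
  rw [dW, ← ENNReal.ofReal_le_iff_le_toReal hfin]
  have := ofReal_abs_sub_le_spDist (ofReal_abs_height_sub_le_wCost hε n) u v
  rwa [height_of_edgeAt n k u v h, add_sub_cancel_left, abs_of_pos (by positivity)] at this

theorem statement12_general (ε : ℝ) (hε0 : 0 < ε) (n : ℕ)
    (Y : Type u) [MetricSpace Y] (e : ℝ)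
    (hequi : ∀ u v : Y, u ≠ v → dist u v = e)
    (f : Vert n → Y) (hf : Function.Injective f)
    (K r : ℝ) (hr : 0 < r)
    (hemb : ∀ a b : Vert n, r * dW ε n a b ≤ dist (f a) (f b) ∧
      dist (f a) (f b) ≤ K * (r * dW ε n a b)) :
    (1 / 2 + ε) ^ (-(n : ℤ)) ≤ K := by
  obtain ⟨s, t, hst⟩ := exists_edgeAt_zero n
  obtain ⟨a, b, hab⟩ := exists_edgeAt_self n
  have hst_ge : 1 ≤ dW ε n s t := by simpa using le_dW_of_edgeAt hε0.le hst
  have hab_pos : 0 < dW ε n a b := (by positivity : (0 : ℝ) < (1 / 2) ^ n).trans_le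
    (le_dW_of_edgeAt hε0.le hab)
  have hdist : dist (f s) (f t) = dist (f a) (f b) := by
    rw [hequi _ _ (hf.ne (ne_of_edgeAt hst)), hequi _ _ (hf.ne (ne_of_edgeAt hab))]
  have hratio : dW ε n s t ≤ K * dW ε n a b := by
    refine le_of_mul_le_mul_left ?_ hr
    calc r * dW ε n s t ≤ dist (f s) (f t) := (hemb s t).1
      _ = dist (f a) (f b) := hdist
      _ ≤ K * (r * dW ε n a b) := (hemb a b).2
      _ = r * (K * dW ε n a b) := by ring
  calc (1 / 2 + ε) ^ (-(n : ℤ)) = 1 / (1 / 2 + ε) ^ n := by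
        rw [zpow_neg, zpow_natCast, inv_eq_one_div]
    _ ≤ 1 / dW ε n a b := one_div_le_one_div_of_le hab_pos (dW_le_of_edgeAt hε0.le hab)
    _ ≤ dW ε n s t / dW ε n a b := by gcongr
    _ ≤ K := (div_le_iff₀ hab_pos).2 hratio

/-- Every injective map from the weighted diamond `W n` into an
equilateral metric space has distortion at least `(1/2+ε)^{-n}`. -/
theorem statement12 (ε : ℝ) (hε0 : 0 < ε) (hε : ε < 1 / 2) (n : ℕ)
    (Y : Type u) [MetricSpace Y] (e : ℝ) (he : 0 < e)
    (hequi : ∀ u v : Y, u ≠ v → dist u v = e)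
    (f : Vert n → Y) (hf : Function.Injective f)
    (K r : ℝ) (hr : 0 < r)
    (hemb : ∀ a b : Vert n, r * dW ε n a b ≤ dist (f a) (f b) ∧
      dist (f a) (f b) ≤ K * (r * dW ε n a b)) :
    (1 / 2 + ε) ^ (-(n : ℤ)) ≤ K :=
  statement12_general ε hε0 n Y e hequi f hf K r hr hemb

end Stmt
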